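/- Let u′ be a nonnegative odometer on the comb graph C_n that is stable under σ, instr. Then the true odometer stabilizing σ on C_n leaves at least as many particles sleeping on C_n as does u′. -/

import Mathlib

/-! # Statement 13: the least-action principle on the comb graph.

If `u′` is a nonnegative stable odometer for `σ, instr` on `C_n`, then the true odometer
(the outcome of any legal stabilizing procedure) leaves at least as many particles
sleeping on `C_n` as `u′` does.  The number of particles left sleeping by `u′` is
`∑_{v=1}^n (h(v) + h(v′))`, the sum of the flow balances of `u′`. -/

open Finset

namespace CombARW

/-- Instructions at a spine site of the comb. -/
inductive SpI | sleep | left | up | right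
deriving DecidableEq

/-- Instructions at a tooth site of the comb. -/
inductive ToI | sleep | down
deriving DecidableEq

/-- Double-sided instruction stacks on the comb graph `C_n`: `sp v` is the stack at spine
site `v ∈ {1,…,n}` and `th v` is the stack at the tooth `v′` attached to `v`. -/
structure Stacks (n : ℕ) where
  sp : ℕ → ℤ → SpI
  th : ℕ → ℤ → ToI

/-- The instruction at index `0` is `left` on the spine and `down` on the teeth. -/
def ValidStacks {n : ℕ} (St : Stacks n) : Prop :=
  ∀ v, 1 ≤ v → v ≤ n → St.sp v 0 = SpI.left ∧ St.th v 0 = ToI.down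

/-- An odometer on `C_n`: `sp v` for spine sites `v ∈ {0,…,n+1}` and `th v` for teeth. -/
structure Odom (n : ℕ) where
  sp : ℕ → ℤ
  th : ℕ → ℤ

/-- Odometers vanish at the sinks `0` and `n+1`. -/
def IsOdom {n : ℕ} (u : Odom n) : Prop := u.sp 0 = 0 ∧ u.sp (n + 1) = 0

/-- The signed number of instructions equal to `t` used by the odometer value `m` in the
stack `g`: the number of indices `1 ≤ i ≤ m` with `g i = t` if `m ≥ 0`, and minus the
number of indices `m ≤ i ≤ 0` with `g i = t` if `m < 0`. -/
noncomputable def signedCount {α : Type*} [DecidableEq α] (g : ℤ → α) (t : α) (m : ℤ) : ℤ :=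
  if 0 ≤ m then ((Finset.Icc 1 m).filter fun i => g i = t).card
  else -(((Finset.Icc m 0).filter fun i => g i = t).card : ℤ)

variable {n : ℕ}

/-- `left_u(v)`: the signed number of `left` instructions used at spine site `v`
(zero at the sinks). -/
noncomputable def leftC (St : Stacks n) (u : Odom n) (v : ℕ) : ℤ :=
  if 1 ≤ v ∧ v ≤ n then signedCount (St.sp v) SpI.left (u.sp v) else 0

/-- `right_u(v)`. -/
noncomputable def rightC (St : Stacks n) (u : Odom n) (v : ℕ) : ℤ :=
  if 1 ≤ v ∧ v ≤ n then signedCount (St.sp v) SpI.right (u.sp v) else 0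

/-- `up_u(v)`. -/
noncomputable def upC (St : Stacks n) (u : Odom n) (v : ℕ) : ℤ :=
  if 1 ≤ v ∧ v ≤ n then signedCount (St.sp v) SpI.up (u.sp v) else 0

/-- `down_u(v′)`: the signed number of `down` instructions used at the tooth `v′`. -/
noncomputable def downC (St : Stacks n) (u : Odom n) (v : ℕ) : ℤ :=
  if 1 ≤ v ∧ v ≤ n then signedCount (St.th v) ToI.down (u.th v) else 0

/-- A site of the comb holds either `k` active particles or a single sleeping particle. -/
inductive SiteState | act : ℕ → SiteState | sleeper
deriving DecidableEq

/-- `|σ(v)|`: the number of particles at a site, with `|𝔰| = 1`. -/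
def SiteState.card : SiteState → ℕ
  | act k => k
  | sleeper => 1

/-- A particle configuration on `C_n` (spine and teeth). -/
structure Config (n : ℕ) where
  sp : ℕ → SiteState
  th : ℕ → SiteState

/-- `|σ(v)| + |σ(v′)|`. -/
def cfgWt (σ : Config n) (i : ℕ) : ℤ := ((σ.sp i).card : ℤ) + ((σ.th i).card : ℤ)

/-- `h(v) = |σ(v)| + In(v;u) − Out(v;u)` at the spine site `v`. -/
noncomputable def hSp (St : Stacks n) (σ : Config n) (u : Odom n) (v : ℕ) : ℤ :=
  ((σ.sp v).card : ℤ) + (rightC St u (v - 1) + leftC St u (v + 1) + downC St u v)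
    - (rightC St u v + leftC St u v + upC St u v)

/-- `h(v′) = |σ(v′)| + In(v′;u) − Out(v′;u)` at the tooth `v′`. -/
noncomputable def hTh (St : Stacks n) (σ : Config n) (u : Odom n) (v : ℕ) : ℤ :=
  ((σ.th v).card : ℤ) + upC St u v - downC St u v

/-- The odometer `u` is *stable* under `σ, instr`: at every non-sink site the flow balance
`h(v)` lies in `{0,1}`, with `h(v) = 1` iff the last used instruction is `sleep`. -/
def IsStable (St : Stacks n) (σ : Config n) (u : Odom n) : Prop :=
  ∀ v, 1 ≤ v → v ≤ n →
    ((hSp St σ u v = 0 ∨ hSp St σ u v = 1) ∧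
      (hSp St σ u v = 1 ↔ St.sp v (u.sp v) = SpI.sleep)) ∧
    ((hTh St σ u v = 0 ∨ hTh St σ u v = 1) ∧
      (hTh St σ u v = 1 ↔ St.th v (u.th v) = ToI.sleep))

/-- `S_n(instr, σ, f₀)`: the stable odometers with net flow `−left_u(1) = f₀` from site
`0` to site `1`. -/
def StableSet (St : Stacks n) (σ : Config n) (f0 : ℤ) : Set (Odom n) :=
  {u | IsOdom u ∧ IsStable St σ u ∧ -leftC St u 1 = f0}

/-- `m` is *the minimal odometer* of `S_n(instr, σ, f₀)`: `m(0) = 0 = m(n+1)`, each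
`m(v)` is the least integer whose `left`-count matches the inflow
`right_m(v−1) − f₀ − ∑_{i<v}(|σ(i)|+|σ(i′)|)`, and each `m(v′)` is the least integer
whose `down`-count is `up_m(v) + |σ(v′)|`. -/
def MinOdomSpec (St : Stacks n) (σ : Config n) (f0 : ℤ) (m : Odom n) : Prop :=
  m.sp 0 = 0 ∧ m.sp (n + 1) = 0 ∧
  ∀ v, 1 ≤ v → v ≤ n →
    IsLeast {x : ℤ | signedCount (St.sp v) SpI.left x
        = rightC St m (v - 1) - f0 - ∑ i ∈ Finset.Icc 1 (v - 1), cfgWt σ i} (m.sp v) ∧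
    IsLeast {x : ℤ | signedCount (St.th v) ToI.down x
        = upC St m v + ((σ.th v).card : ℤ)} (m.th v)

end CombARW

namespace CombARW

variable {n : ℕ}

/-- A non-sink site of the comb: `Sum.inl v` is the spine site `v` and `Sum.inr v` is the
tooth `v′`. -/
abbrev Site := ℕ ⊕ ℕ

/-- An arriving active particle: it wakes a sleeping particle and increments the count. -/
def SiteState.addOne : SiteState → SiteState
  | act k => act (k + 1)
  | sleeper => act 2

/-- Move one particle from spine site `v` (currently holding `k` active particles) to the
spine site `w`; if `w` is a sink the particle is killed. -/
def moveSp (σ : Config n) (v w k : ℕ) : Config n :=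
  let σ1 := Function.update σ.sp v (SiteState.act (k - 1))
  if 1 ≤ w ∧ w ≤ n then ⟨Function.update σ1 w ((σ1 w).addOne), σ.th⟩ else ⟨σ1, σ.th⟩

/-- Topple the spine site `v`: execute the next instruction `instr_v(u(v)+1)` there. -/
def toppleSp (St : Stacks n) (c : Config n × Odom n) (v : ℕ) : Config n × Odom n :=
  let σ := c.1; let u := c.2
  let j := u.sp v + 1
  let u' : Odom n := ⟨Function.update u.sp v j, u.th⟩
  match St.sp v j, σ.sp v with
  | SpI.sleep, SiteState.act k =>
      (⟨Function.update σ.sp v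
          (if k = 1 then SiteState.sleeper else SiteState.act k), σ.th⟩, u')
  | SpI.left, SiteState.act k => (moveSp σ v (v - 1) k, u')
  | SpI.right, SiteState.act k => (moveSp σ v (v + 1) k, u')
  | SpI.up, SiteState.act k =>
      (⟨Function.update σ.sp v (SiteState.act (k - 1)),
        Function.update σ.th v ((σ.th v).addOne)⟩, u')
  | _, _ => (σ, u')

/-- Topple the tooth `v′`: execute the next instruction `instr_{v′}(u(v′)+1)` there. -/
def toppleTh (St : Stacks n) (c : Config n × Odom n) (v : ℕ) : Config n × Odom n :=
  let σ := c.1; let u := c.2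
  let j := u.th v + 1
  let u' : Odom n := ⟨u.sp, Function.update u.th v j⟩
  match St.th v j, σ.th v with
  | ToI.sleep, SiteState.act k =>
      (⟨σ.sp, Function.update σ.th v
          (if k = 1 then SiteState.sleeper else SiteState.act k)⟩, u')
  | ToI.down, SiteState.act k =>
      (⟨Function.update σ.sp v ((σ.sp v).addOne),
        Function.update σ.th v (SiteState.act (k - 1))⟩, u')
  | _, _ => (σ, u')

/-- Topple the site `s`. -/
def toppleAt (St : Stacks n) (c : Config n × Odom n) (s : Site) : Config n × Odom n :=
  Sum.elim (toppleSp St c) (toppleTh St c) s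

/-- The zero odometer. -/
def zeroOdom (n : ℕ) : Odom n := ⟨fun _ => 0, fun _ => 0⟩

/-- Run a stabilizing procedure: starting from `σ` (with the zero odometer), execute the
given list of topplings in order. -/
def run (St : Stacks n) (σ : Config n) (L : List Site) : Config n × Odom n :=
  L.foldl (toppleAt St) (σ, zeroOdom n)

/-- The site `s` is *unstable* in the configuration `σ`: it is a non-sink site holding at
least one active particle. -/
def IsUnstable (σ : Config n) (s : Site) : Prop :=
  match s with
  | Sum.inl v => 1 ≤ v ∧ v ≤ n ∧ ∃ k, σ.sp v = SiteState.act (k + 1)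
  | Sum.inr v => 1 ≤ v ∧ v ≤ n ∧ ∃ k, σ.th v = SiteState.act (k + 1)

/-- The configuration `σ` is stable: every non-sink site is empty or holds a single
sleeping particle. -/
def IsStableConfig (σ : Config n) : Prop :=
  ∀ v, 1 ≤ v → v ≤ n →
    (σ.sp v = SiteState.act 0 ∨ σ.sp v = SiteState.sleeper) ∧
    (σ.th v = SiteState.act 0 ∨ σ.th v = SiteState.sleeper)

/-- The list `L` is a *legal* toppling sequence from `σ`: each toppled site is unstable at
the moment it is toppled. -/
def LegalSeq (St : Stacks n) (σ : Config n) (L : List Site) : Prop :=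
  ∀ i : ℕ, ∀ h : i < L.length, IsUnstable (run St σ (L.take i)).1 (L.get ⟨i, h⟩)

/-- The list `L` is a legal stabilizing sequence for `σ`. -/
def Stabilizes (St : Stacks n) (σ : Config n) (L : List Site) : Prop :=
  LegalSeq St σ L ∧ IsStableConfig (run St σ L).1

/-- The number of sleeping particles of a configuration on `C_n`. -/
def sleepCount (n : ℕ) (σ : Config n) : ℕ :=
  ∑ v ∈ Finset.Icc 1 n,
    ((if σ.sp v = SiteState.sleeper then 1 else 0) +
      (if σ.th v = SiteState.sleeper then 1 else 0))

/-- The configuration with one active particle at every non-sink site of `C_n`. -/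
def onePerSite (n : ℕ) : Config n :=
  ⟨fun v => if 1 ≤ v ∧ v ≤ n then SiteState.act 1 else SiteState.act 0,
    fun v => if 1 ≤ v ∧ v ≤ n then SiteState.act 1 else SiteState.act 0⟩

end CombARW

namespace CombARW

variable {n : ℕ}

section SignedCount

variable {α : Type*} [DecidableEq α]

lemma signedCount_zero (g : ℤ → α) (t : α) : signedCount g t 0 = 0 := by
  simp [signedCount]

lemma signedCount_succ (g : ℤ → α) (t : α) {m : ℤ} (hm : 0 ≤ m) :
    signedCount g t (m + 1) = signedCount g t m + (if g (m + 1) = t then 1 else 0) := by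
  unfold signedCount
  rw [if_pos (by omega), if_pos hm]
  have h1 : Finset.Icc (1 : ℤ) (m + 1) = insert (m + 1) (Finset.Icc 1 m) := by
    ext x; simp [Finset.mem_Icc]; omega
  have h2 : (m + 1) ∉ Finset.filter (fun i => g i = t) (Finset.Icc (1 : ℤ) m) := by
    intro h
    have := (Finset.mem_filter.mp h).1
    rw [Finset.mem_Icc] at this
    omega
  rw [h1, Finset.filter_insert]
  split_ifs with h
  · rw [Finset.card_insert_of_notMem h2]; push_cast; ring
  · simp

lemma signedCount_mono (g : ℤ → α) (t : α) {m m' : ℤ} (h0 : 0 ≤ m) (h : m ≤ m') :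
    signedCount g t m ≤ signedCount g t m' := by
  unfold signedCount
  rw [if_pos h0, if_pos (le_trans h0 h)]
  exact_mod_cast Nat.cast_le.mpr (Finset.card_le_card
    (Finset.filter_subset_filter _ (Finset.Icc_subset_Icc le_rfl h)))

end SignedCount

section Telescope

lemma tele_sub (f : ℕ → ℤ) (n : ℕ) :
    ∑ v ∈ Finset.Icc 1 n, (f (v - 1) - f v) = f 0 - f n := by
  induction n with
  | zero => simp
  | succ m ih =>
      rw [Finset.sum_Icc_succ_top (by omega), ih]
      have : m + 1 - 1 = m := rfl
      rw [this]; ring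

lemma tele_add (f : ℕ → ℤ) (n : ℕ) :
    ∑ v ∈ Finset.Icc 1 n, (f (v + 1) - f v) = f (n + 1) - f 1 := by
  induction n with
  | zero => simp
  | succ m ih =>
      rw [Finset.sum_Icc_succ_top (by omega), ih]; ring

lemma sum_h_eq (St : Stacks n) (σ : Config n) (u : Odom n) :
    ∑ v ∈ Finset.Icc 1 n, (hSp St σ u v + hTh St σ u v)
      = (∑ v ∈ Finset.Icc 1 n, cfgWt σ v) - rightC St u n - leftC St u 1 := by
  have hterm : ∀ v, hSp St σ u v + hTh St σ u v
      = cfgWt σ v + (rightC St u (v - 1) - rightC St u v)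
        + (leftC St u (v + 1) - leftC St u v) := by
    intro v; unfold hSp hTh cfgWt; ring
  rw [Finset.sum_congr rfl (fun v _ => hterm v), Finset.sum_add_distrib,
    Finset.sum_add_distrib, tele_sub, tele_add]
  have h1 : rightC St u 0 = 0 := by unfold rightC; rw [if_neg (by omega)]
  have h2 : leftC St u (n + 1) = 0 := by unfold leftC; rw [if_neg (by omega)]
  rw [h1, h2]; ring

end Telescope

section Congr

lemma leftC_congr (St : Stacks n) {u u2 : Odom n} (v : ℕ) (h : u2.sp v = u.sp v) :
    leftC St u2 v = leftC St u v := by unfold leftC; rw [h]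

lemma rightC_congr (St : Stacks n) {u u2 : Odom n} (v : ℕ) (h : u2.sp v = u.sp v) :
    rightC St u2 v = rightC St u v := by unfold rightC; rw [h]

lemma upC_congr (St : Stacks n) {u u2 : Odom n} (v : ℕ) (h : u2.sp v = u.sp v) :
    upC St u2 v = upC St u v := by unfold upC; rw [h]

lemma downC_congr (St : Stacks n) {u u2 : Odom n} (v : ℕ) (h : u2.th v = u.th v) :
    downC St u2 v = downC St u v := by unfold downC; rw [h]

end Congr

/-- The invariant maintained along any legal toppling sequence. -/
def Good (St : Stacks n) (σ : Config n) (c : Config n × Odom n) : Prop :=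
  (∀ v, 0 ≤ c.2.sp v) ∧ (∀ v, 0 ≤ c.2.th v) ∧
  (∀ v, 1 ≤ v → v ≤ n →
    ((c.1.sp v).card : ℤ) = hSp St σ c.2 v ∧
    ((c.1.th v).card : ℤ) = hTh St σ c.2 v) ∧
  (∀ v, 1 ≤ v → v ≤ n →
    (1 ≤ c.2.sp v → St.sp v (c.2.sp v) = SpI.sleep →
      c.1.sp v = SiteState.sleeper ∨ 2 ≤ (c.1.sp v).card) ∧
    (1 ≤ c.2.th v → St.th v (c.2.th v) = ToI.sleep →
      c.1.th v = SiteState.sleeper ∨ 2 ≤ (c.1.th v).card))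

lemma addOne_card (s : SiteState) : (s.addOne).card = s.card + 1 := by
  cases s <;> rfl

lemma toppleSp_odom (St : Stacks n) (c : Config n × Odom n) (v : ℕ) :
    (toppleSp St c v).2 = ⟨Function.update c.2.sp v (c.2.sp v + 1), c.2.th⟩ := by
  unfold toppleSp
  dsimp only
  split <;> rfl

lemma toppleTh_odom (St : Stacks n) (c : Config n × Odom n) (v : ℕ) :
    (toppleTh St c v).2 = ⟨c.2.sp, Function.update c.2.th v (c.2.th v + 1)⟩ := by
  unfold toppleTh
  dsimp only
  split <;> rfl

lemma addOne_sleep_inv {s : SiteState} (h : s = SiteState.sleeper ∨ 2 ≤ s.card) :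
    s.addOne = SiteState.sleeper ∨ 2 ≤ (s.addOne).card := by
  right; rw [addOne_card]
  rcases h with h | h
  · subst h; simp [SiteState.card]
  · omega

section MoveSp

variable (σ : Config n) (v w k : ℕ)

lemma moveSp_th : (moveSp σ v w k).th = σ.th := by
  unfold moveSp; dsimp only; split_ifs <;> rfl

lemma moveSp_sp_self (hvw : w ≠ v) : (moveSp σ v w k).sp v = SiteState.act (k - 1) := by
  unfold moveSp; dsimp only; split_ifs with h <;> dsimp only
  · rw [Function.update_of_ne (Ne.symm hvw), Function.update_self]
  · rw [Function.update_self]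

lemma moveSp_sp_target (hvw : w ≠ v) (hw : 1 ≤ w ∧ w ≤ n) :
    (moveSp σ v w k).sp w = (σ.sp w).addOne := by
  unfold moveSp; dsimp only; rw [if_pos hw]; dsimp only
  rw [Function.update_self, Function.update_of_ne hvw]

lemma moveSp_sp_other {x : ℕ} (hx1 : x ≠ v) (hx2 : x ≠ w) :
    (moveSp σ v w k).sp x = σ.sp x := by
  unfold moveSp; dsimp only; split_ifs with h <;> dsimp only
  · rw [Function.update_of_ne hx2, Function.update_of_ne hx1]
  · exact Function.update_of_ne hx1 _ _

end MoveSp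

lemma good_toppleSp (St : Stacks n) (σ : Config n) {c : Config n × Odom n} {v : ℕ}
    (hv1 : 1 ≤ v) (hv2 : v ≤ n) (k : ℕ) (hσ : c.1.sp v = SiteState.act (k + 1))
    (hg : Good St σ c) : Good St σ (toppleSp St c v) := by
  obtain ⟨hnnS, hnnT, hmass, hslp⟩ := hg
  have hod : (toppleSp St c v).2
      = ⟨Function.update c.2.sp v (c.2.sp v + 1), c.2.th⟩ := toppleSp_odom St c v
  set u := c.2 with hu
  set τ := c.1 with hτ
  set u2 : Odom n := ⟨Function.update u.sp v (u.sp v + 1), u.th⟩ with hu2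
  have hu2v : u2.sp v = u.sp v + 1 := Function.update_self v _ u.sp
  have hu2ne : ∀ w, w ≠ v → u2.sp w = u.sp w := fun w hw => Function.update_of_ne hw _ _
  have hu2th : u2.th = u.th := rfl
  -- count changes
  have cD : ∀ w, downC St u2 w = downC St u w := fun w => downC_congr St w rfl
  have cOffL : ∀ w, w ≠ v → leftC St u2 w = leftC St u w :=
    fun w hw => leftC_congr St w (hu2ne w hw)
  have cOffR : ∀ w, w ≠ v → rightC St u2 w = rightC St u w :=
    fun w hw => rightC_congr St w (hu2ne w hw)
  have cOffU : ∀ w, w ≠ v → upC St u2 w = upC St u w :=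
    fun w hw => upC_congr St w (hu2ne w hw)
  have cLv : leftC St u2 v
      = leftC St u v + (if St.sp v (u.sp v + 1) = SpI.left then 1 else 0) := by
    unfold leftC; rw [if_pos ⟨hv1, hv2⟩, if_pos ⟨hv1, hv2⟩, hu2v]
    exact signedCount_succ _ _ (hnnS v)
  have cRv : rightC St u2 v
      = rightC St u v + (if St.sp v (u.sp v + 1) = SpI.right then 1 else 0) := by
    unfold rightC; rw [if_pos ⟨hv1, hv2⟩, if_pos ⟨hv1, hv2⟩, hu2v]
    exact signedCount_succ _ _ (hnnS v)
  have cUv : upC St u2 v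
      = upC St u v + (if St.sp v (u.sp v + 1) = SpI.up then 1 else 0) := by
    unfold upC; rw [if_pos ⟨hv1, hv2⟩, if_pos ⟨hv1, hv2⟩, hu2v]
    exact signedCount_succ _ _ (hnnS v)
  -- the new odometer is nonnegative etc.
  have hnnS2 : ∀ w, 0 ≤ u2.sp w := by
    intro w
    by_cases hw : w = v
    · subst hw; rw [hu2v]; have := hnnS w; omega
    · rw [hu2ne w hw]; exact hnnS w
  have hnnT2 : ∀ w, 0 ≤ u2.th w := hnnT
  rcases hins : St.sp v (u.sp v + 1) with _ | _ | _ | _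
  -- ===================== case sleep =====================
  · have hcfg : (toppleSp St c v).1
        = ⟨Function.update τ.sp v
            (if k + 1 = 1 then SiteState.sleeper else SiteState.act (k + 1)), τ.th⟩ := by
      unfold toppleSp; dsimp only
      rw [← hu, hins, ← hτ, hσ]
    rw [hins] at cLv cRv cUv
    simp only [reduceCtorEq, if_false, if_neg, add_zero] at cLv cRv cUv
    have cL : ∀ w, leftC St u2 w = leftC St u w := by
      intro w; by_cases hw : w = v; · subst hw; exact cLv
      · exact cOffL w hw
    have cR : ∀ w, rightC St u2 w = rightC St u w := by
      intro w; by_cases hw : w = v; · subst hw; exact cRv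
      · exact cOffR w hw
    have cU : ∀ w, upC St u2 w = upC St u w := by
      intro w; by_cases hw : w = v; · subst hw; exact cUv
      · exact cOffU w hw
    have dsp : ∀ w, hSp St σ u2 w = hSp St σ u w := by
      intro w; unfold hSp; rw [cR, cL, cD, cR, cL, cU]
    have dth : ∀ w, hTh St σ u2 w = hTh St σ u w := by
      intro w; unfold hTh; rw [cU, cD]
    refine ⟨by rw [hod]; exact hnnS2, by rw [hod]; exact hnnT2, ?_, ?_⟩
    · intro w hw1 hw2
      rw [hod, hcfg, dsp, dth]
      by_cases hwv : w = v
      · subst hwv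
        refine ⟨?_, (hmass w hw1 hw2).2⟩
        show ((Function.update τ.sp w _ w).card : ℤ) = _
        rw [Function.update_self]
        have h1 := (hmass w hw1 hw2).1
        rw [hσ] at h1
        split_ifs with h
        · have : k = 0 := by omega
          subst this; exact h1
        · exact h1
      · have h3 : Function.update τ.sp v
            (if k + 1 = 1 then SiteState.sleeper else SiteState.act (k + 1)) w = τ.sp w :=
          Function.update_of_ne hwv _ _
        refine ⟨?_, (hmass w hw1 hw2).2⟩
        show ((Function.update τ.sp v _ w).card : ℤ) = _
        rw [h3]; exact (hmass w hw1 hw2).1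
    · intro w hw1 hw2
      rw [hod, hcfg]
      by_cases hwv : w = v
      · subst hwv
        refine ⟨?_, fun h1 h2 => (hslp w hw1 hw2).2 h1 h2⟩
        intro _ _
        show Function.update τ.sp w _ w = _ ∨ 2 ≤ (Function.update τ.sp w _ w).card
        rw [Function.update_self]
        split_ifs with h
        · left; rfl
        · right; show 2 ≤ k + 1; omega
      · have h3 : Function.update τ.sp v
            (if k + 1 = 1 then SiteState.sleeper else SiteState.act (k + 1)) w = τ.sp w :=
          Function.update_of_ne hwv _ _
        refine ⟨?_, fun h1 h2 => (hslp w hw1 hw2).2 h1 h2⟩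
        intro h1 h2
        rw [hu2ne w hwv] at h1 h2
        show Function.update τ.sp v _ w = _ ∨ 2 ≤ (Function.update τ.sp v _ w).card
        rw [h3]
        exact (hslp w hw1 hw2).1 h1 h2
  -- ===================== case left =====================
  · have hcfg : (toppleSp St c v).1 = moveSp τ v (v - 1) (k + 1) := by
      unfold toppleSp; dsimp only
      rw [← hu, hins, ← hτ, hσ]
    rw [hins] at cLv cRv cUv
    simp only [reduceCtorEq, if_false, if_true, add_zero, reduceIte] at cLv cRv cUv
    have cRall : ∀ w, rightC St u2 w = rightC St u w := by
      intro w; by_cases hw : w = v; · subst hw; exact cRv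
      · exact cOffR w hw
    have cUall : ∀ w, upC St u2 w = upC St u w := by
      intro w; by_cases hw : w = v; · subst hw; exact cUv
      · exact cOffU w hw
    have dth : ∀ w, hTh St σ u2 w = hTh St σ u w := by
      intro w; unfold hTh; rw [cUall, cD]
    have dv : hSp St σ u2 v = hSp St σ u v - 1 := by
      unfold hSp
      simp only [cRall, cD, cUall, cLv, cOffL (v + 1) (by omega)]
      ring
    have dpred : ∀ w, w + 1 = v → hSp St σ u2 w = hSp St σ u w + 1 := by
      intro w hw
      unfold hSp
      rw [hw]
      simp only [cRall, cD, cUall, cLv, cOffL w (by omega)]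
      ring
    have dother : ∀ w, w ≠ v → w + 1 ≠ v → hSp St σ u2 w = hSp St σ u w := by
      intro w h1 h2
      unfold hSp
      simp only [cRall, cD, cUall, cOffL w h1, cOffL (w + 1) h2]
    refine ⟨by rw [hod]; exact hnnS2, by rw [hod]; exact hnnT2, ?_, ?_⟩
    · intro w hw1 hw2
      rw [hod, hcfg]
      refine ⟨?_, ?_⟩
      · by_cases hwv : w = v
        · subst hwv
          rw [moveSp_sp_self τ w (w - 1) (k + 1) (by omega), dv]
          have h1 := (hmass w hw1 hw2).1
          rw [hσ] at h1
          have hk : k + 1 - 1 = k := rfl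
          rw [hk]
          simp only [SiteState.card] at h1 ⊢
          push_cast at h1 ⊢
          omega
        · by_cases hwp : w + 1 = v
          · have hw' : v - 1 = w := by omega
            rw [← hw', moveSp_sp_target τ v (v - 1) (k + 1) (by omega) (by omega),
              addOne_card, hw', dpred w hwp]
            have h1 := (hmass w hw1 hw2).1
            push_cast
            omega
          · rw [moveSp_sp_other τ v (v - 1) (k + 1) hwv (by omega), dother w hwv hwp]
            exact (hmass w hw1 hw2).1
      · rw [moveSp_th, dth]
        exact (hmass w hw1 hw2).2
    · intro w hw1 hw2
      rw [hod, hcfg]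
      constructor
      · intro h1 h2
        by_cases hwv : w = v
        · exfalso; subst hwv
          rw [hu2v, hins] at h2
          exact SpI.noConfusion h2
        · rw [hu2ne w hwv] at h1 h2
          by_cases hwp : w + 1 = v
          · have hw' : v - 1 = w := by omega
            rw [← hw', moveSp_sp_target τ v (v - 1) (k + 1) (by omega) (by omega), hw']
            exact addOne_sleep_inv ((hslp w hw1 hw2).1 h1 h2)
          · rw [moveSp_sp_other τ v (v - 1) (k + 1) hwv (by omega)]
            exact (hslp w hw1 hw2).1 h1 h2
      · intro h1 h2
        rw [moveSp_th]
        exact (hslp w hw1 hw2).2 h1 h2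
  -- ===================== case up =====================
  · have hcfg : (toppleSp St c v).1
        = ⟨Function.update τ.sp v (SiteState.act (k + 1 - 1)),
            Function.update τ.th v ((τ.th v).addOne)⟩ := by
      unfold toppleSp; dsimp only
      rw [← hu, hins, ← hτ, hσ]
    rw [hins] at cLv cRv cUv
    simp only [reduceCtorEq, if_false, if_true, add_zero, reduceIte] at cLv cRv cUv
    have cRall : ∀ w, rightC St u2 w = rightC St u w := by
      intro w; by_cases hw : w = v; · subst hw; exact cRv
      · exact cOffR w hw
    have cLall : ∀ w, leftC St u2 w = leftC St u w := by
      intro w; by_cases hw : w = v; · subst hw; exact cLv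
      · exact cOffL w hw
    have dv : hSp St σ u2 v = hSp St σ u v - 1 := by
      unfold hSp
      simp only [cRall, cD, cLall, cUv]
      ring
    have dother : ∀ w, w ≠ v → hSp St σ u2 w = hSp St σ u w := by
      intro w h1
      unfold hSp
      simp only [cRall, cD, cLall, cOffU w h1]
    have dthv : hTh St σ u2 v = hTh St σ u v + 1 := by
      unfold hTh
      rw [cUv, cD]
      ring
    have dtho : ∀ w, w ≠ v → hTh St σ u2 w = hTh St σ u w := by
      intro w h1
      unfold hTh
      rw [cOffU w h1, cD]
    refine ⟨by rw [hod]; exact hnnS2, by rw [hod]; exact hnnT2, ?_, ?_⟩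
    · intro w hw1 hw2
      rw [hod, hcfg]
      by_cases hwv : w = v
      · subst hwv
        constructor
        · show ((Function.update τ.sp w (SiteState.act (k + 1 - 1)) w).card : ℤ) = _
          rw [Function.update_self, dv]
          have h1 := (hmass w hw1 hw2).1
          rw [hσ] at h1
          have hk : k + 1 - 1 = k := rfl
          rw [hk]
          simp only [SiteState.card] at h1 ⊢
          push_cast at h1 ⊢
          omega
        · show ((Function.update τ.th w ((τ.th w).addOne) w).card : ℤ) = _
          rw [Function.update_self, addOne_card, dthv]
          have h2 := (hmass w hw1 hw2).2
          push_cast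
          omega
      · constructor
        · show ((Function.update τ.sp v (SiteState.act (k + 1 - 1)) w).card : ℤ) = _
          rw [Function.update_of_ne hwv, dother w hwv]
          exact (hmass w hw1 hw2).1
        · show ((Function.update τ.th v ((τ.th v).addOne) w).card : ℤ) = _
          rw [Function.update_of_ne hwv, dtho w hwv]
          exact (hmass w hw1 hw2).2
    · intro w hw1 hw2
      rw [hod, hcfg]
      by_cases hwv : w = v
      · subst hwv
        constructor
        · intro h1 h2
          exfalso
          rw [hu2v, hins] at h2
          exact SpI.noConfusion h2
        · intro h1 h2
          show Function.update τ.th w ((τ.th w).addOne) w = _ ∨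
            2 ≤ (Function.update τ.th w ((τ.th w).addOne) w).card
          rw [Function.update_self]
          exact addOne_sleep_inv ((hslp w hw1 hw2).2 h1 h2)
      · constructor
        · intro h1 h2
          rw [hu2ne w hwv] at h1 h2
          show Function.update τ.sp v (SiteState.act (k + 1 - 1)) w = _ ∨
            2 ≤ (Function.update τ.sp v (SiteState.act (k + 1 - 1)) w).card
          rw [Function.update_of_ne hwv]
          exact (hslp w hw1 hw2).1 h1 h2
        · intro h1 h2
          show Function.update τ.th v ((τ.th v).addOne) w = _ ∨
            2 ≤ (Function.update τ.th v ((τ.th v).addOne) w).card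
          rw [Function.update_of_ne hwv]
          exact (hslp w hw1 hw2).2 h1 h2
  -- ===================== case right =====================
  · have hcfg : (toppleSp St c v).1 = moveSp τ v (v + 1) (k + 1) := by
      unfold toppleSp; dsimp only
      rw [← hu, hins, ← hτ, hσ]
    rw [hins] at cLv cRv cUv
    simp only [reduceCtorEq, if_false, if_true, add_zero, reduceIte] at cLv cRv cUv
    have cLall : ∀ w, leftC St u2 w = leftC St u w := by
      intro w; by_cases hw : w = v; · subst hw; exact cLv
      · exact cOffL w hw
    have cUall : ∀ w, upC St u2 w = upC St u w := by
      intro w; by_cases hw : w = v; · subst hw; exact cUv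
      · exact cOffU w hw
    have dth : ∀ w, hTh St σ u2 w = hTh St σ u w := by
      intro w; unfold hTh; rw [cUall, cD]
    have dv : hSp St σ u2 v = hSp St σ u v - 1 := by
      unfold hSp
      simp only [cLall, cD, cUall, cRv, cOffR (v - 1) (by omega)]
      ring
    have dsucc : ∀ w, w = v + 1 → hSp St σ u2 w = hSp St σ u w + 1 := by
      intro w hw
      unfold hSp
      have hw' : w - 1 = v := by omega
      rw [hw']
      simp only [cLall, cD, cUall, cRv, cOffR w (by omega)]
      ring
    have dother : ∀ w, w ≠ v → w ≠ v + 1 → hSp St σ u2 w = hSp St σ u w := by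
      intro w h1 h2
      unfold hSp
      simp only [cLall, cD, cUall, cOffR w h1, cOffR (w - 1) (by omega)]
    refine ⟨by rw [hod]; exact hnnS2, by rw [hod]; exact hnnT2, ?_, ?_⟩
    · intro w hw1 hw2
      rw [hod, hcfg]
      refine ⟨?_, ?_⟩
      · by_cases hwv : w = v
        · subst hwv
          rw [moveSp_sp_self τ w (w + 1) (k + 1) (by omega), dv]
          have h1 := (hmass w hw1 hw2).1
          rw [hσ] at h1
          have hk : k + 1 - 1 = k := rfl
          rw [hk]
          simp only [SiteState.card] at h1 ⊢
          push_cast at h1 ⊢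
          omega
        · by_cases hwp : w = v + 1
          · rw [hwp, moveSp_sp_target τ v (v + 1) (k + 1) (by omega) (by omega),
              addOne_card, ← hwp, dsucc w hwp]
            have h1 := (hmass w hw1 hw2).1
            push_cast
            omega
          · rw [moveSp_sp_other τ v (v + 1) (k + 1) hwv hwp, dother w hwv hwp]
            exact (hmass w hw1 hw2).1
      · rw [moveSp_th, dth]
        exact (hmass w hw1 hw2).2
    · intro w hw1 hw2
      rw [hod, hcfg]
      constructor
      · intro h1 h2
        by_cases hwv : w = v
        · exfalso; subst hwv
          rw [hu2v, hins] at h2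
          exact SpI.noConfusion h2
        · rw [hu2ne w hwv] at h1 h2
          by_cases hwp : w = v + 1
          · rw [hwp, moveSp_sp_target τ v (v + 1) (k + 1) (by omega) (by omega), ← hwp]
            exact addOne_sleep_inv ((hslp w hw1 hw2).1 h1 h2)
          · rw [moveSp_sp_other τ v (v + 1) (k + 1) hwv hwp]
            exact (hslp w hw1 hw2).1 h1 h2
      · intro h1 h2
        rw [moveSp_th]
        exact (hslp w hw1 hw2).2 h1 h2

lemma good_toppleTh (St : Stacks n) (σ : Config n) {c : Config n × Odom n} {v : ℕ}
    (hv1 : 1 ≤ v) (hv2 : v ≤ n) (k : ℕ) (hσ : c.1.th v = SiteState.act (k + 1))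
    (hg : Good St σ c) : Good St σ (toppleTh St c v) := by
  obtain ⟨hnnS, hnnT, hmass, hslp⟩ := hg
  have hod : (toppleTh St c v).2
      = ⟨c.2.sp, Function.update c.2.th v (c.2.th v + 1)⟩ := toppleTh_odom St c v
  set u := c.2 with hu
  set τ := c.1 with hτ
  set u2 : Odom n := ⟨u.sp, Function.update u.th v (u.th v + 1)⟩ with hu2
  have hu2v : u2.th v = u.th v + 1 := Function.update_self v _ u.th
  have hu2ne : ∀ w, w ≠ v → u2.th w = u.th w := fun w hw => Function.update_of_ne hw _ _
  have cL : ∀ w, leftC St u2 w = leftC St u w := fun w => leftC_congr St w rfl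
  have cR : ∀ w, rightC St u2 w = rightC St u w := fun w => rightC_congr St w rfl
  have cU : ∀ w, upC St u2 w = upC St u w := fun w => upC_congr St w rfl
  have cOffD : ∀ w, w ≠ v → downC St u2 w = downC St u w :=
    fun w hw => downC_congr St w (hu2ne w hw)
  have cDv : downC St u2 v
      = downC St u v + (if St.th v (u.th v + 1) = ToI.down then 1 else 0) := by
    unfold downC; rw [if_pos ⟨hv1, hv2⟩, if_pos ⟨hv1, hv2⟩, hu2v]
    exact signedCount_succ _ _ (hnnT v)
  have hnnS2 : ∀ w, 0 ≤ u2.sp w := hnnS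
  have hnnT2 : ∀ w, 0 ≤ u2.th w := by
    intro w
    by_cases hw : w = v
    · subst hw; rw [hu2v]; have := hnnT w; omega
    · rw [hu2ne w hw]; exact hnnT w
  rcases hins : St.th v (u.th v + 1) with _ | _
  -- ===================== case sleep =====================
  · have hcfg : (toppleTh St c v).1
        = ⟨τ.sp, Function.update τ.th v
            (if k + 1 = 1 then SiteState.sleeper else SiteState.act (k + 1))⟩ := by
      unfold toppleTh; dsimp only
      rw [← hu, hins, ← hτ, hσ]
    rw [hins] at cDv
    simp only [reduceCtorEq, if_false, add_zero] at cDv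
    have cDall : ∀ w, downC St u2 w = downC St u w := by
      intro w; by_cases hw : w = v; · subst hw; exact cDv
      · exact cOffD w hw
    have dsp : ∀ w, hSp St σ u2 w = hSp St σ u w := by
      intro w; unfold hSp; rw [cR, cL, cDall, cR, cL, cU]
    have dth : ∀ w, hTh St σ u2 w = hTh St σ u w := by
      intro w; unfold hTh; rw [cU, cDall]
    refine ⟨by rw [hod]; exact hnnS2, by rw [hod]; exact hnnT2, ?_, ?_⟩
    · intro w hw1 hw2
      rw [hod, hcfg, dsp, dth]
      by_cases hwv : w = v
      · subst hwv
        refine ⟨(hmass w hw1 hw2).1, ?_⟩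
        show ((Function.update τ.th w _ w).card : ℤ) = _
        rw [Function.update_self]
        have h1 := (hmass w hw1 hw2).2
        rw [hσ] at h1
        split_ifs with h
        · have : k = 0 := by omega
          subst this; exact h1
        · exact h1
      · have h3 : Function.update τ.th v
            (if k + 1 = 1 then SiteState.sleeper else SiteState.act (k + 1)) w = τ.th w :=
          Function.update_of_ne hwv _ _
        refine ⟨(hmass w hw1 hw2).1, ?_⟩
        show ((Function.update τ.th v _ w).card : ℤ) = _
        rw [h3]; exact (hmass w hw1 hw2).2
    · intro w hw1 hw2
      rw [hod, hcfg]
      by_cases hwv : w = v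
      · subst hwv
        refine ⟨fun h1 h2 => (hslp w hw1 hw2).1 h1 h2, ?_⟩
        intro _ _
        show Function.update τ.th w _ w = _ ∨ 2 ≤ (Function.update τ.th w _ w).card
        rw [Function.update_self]
        split_ifs with h
        · left; rfl
        · right; show 2 ≤ k + 1; omega
      · have h3 : Function.update τ.th v
            (if k + 1 = 1 then SiteState.sleeper else SiteState.act (k + 1)) w = τ.th w :=
          Function.update_of_ne hwv _ _
        refine ⟨fun h1 h2 => (hslp w hw1 hw2).1 h1 h2, ?_⟩
        intro h1 h2
        rw [hu2ne w hwv] at h1 h2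
        show Function.update τ.th v _ w = _ ∨ 2 ≤ (Function.update τ.th v _ w).card
        rw [h3]
        exact (hslp w hw1 hw2).2 h1 h2
  -- ===================== case down =====================
  · have hcfg : (toppleTh St c v).1
        = ⟨Function.update τ.sp v ((τ.sp v).addOne),
            Function.update τ.th v (SiteState.act (k + 1 - 1))⟩ := by
      unfold toppleTh; dsimp only
      rw [← hu, hins, ← hτ, hσ]
    rw [hins] at cDv
    simp only [reduceIte] at cDv
    have dv : hSp St σ u2 v = hSp St σ u v + 1 := by
      unfold hSp
      simp only [cR, cL, cU, cDv]
      ring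
    have dother : ∀ w, w ≠ v → hSp St σ u2 w = hSp St σ u w := by
      intro w h1
      unfold hSp
      simp only [cR, cL, cU, cOffD w h1]
    have dthv : hTh St σ u2 v = hTh St σ u v - 1 := by
      unfold hTh
      rw [cU, cDv]
      ring
    have dtho : ∀ w, w ≠ v → hTh St σ u2 w = hTh St σ u w := by
      intro w h1
      unfold hTh
      rw [cU, cOffD w h1]
    refine ⟨by rw [hod]; exact hnnS2, by rw [hod]; exact hnnT2, ?_, ?_⟩
    · intro w hw1 hw2
      rw [hod, hcfg]
      by_cases hwv : w = v
      · subst hwv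
        constructor
        · show ((Function.update τ.sp w ((τ.sp w).addOne) w).card : ℤ) = _
          rw [Function.update_self, addOne_card, dv]
          have h1 := (hmass w hw1 hw2).1
          push_cast
          omega
        · show ((Function.update τ.th w (SiteState.act (k + 1 - 1)) w).card : ℤ) = _
          rw [Function.update_self, dthv]
          have h2 := (hmass w hw1 hw2).2
          rw [hσ] at h2
          have hk : k + 1 - 1 = k := rfl
          rw [hk]
          simp only [SiteState.card] at h2 ⊢
          push_cast at h2 ⊢
          omega
      · constructor
        · show ((Function.update τ.sp v ((τ.sp v).addOne) w).card : ℤ) = _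
          rw [Function.update_of_ne hwv, dother w hwv]
          exact (hmass w hw1 hw2).1
        · show ((Function.update τ.th v (SiteState.act (k + 1 - 1)) w).card : ℤ) = _
          rw [Function.update_of_ne hwv, dtho w hwv]
          exact (hmass w hw1 hw2).2
    · intro w hw1 hw2
      rw [hod, hcfg]
      by_cases hwv : w = v
      · subst hwv
        constructor
        · intro h1 h2
          show Function.update τ.sp w ((τ.sp w).addOne) w = _ ∨
            2 ≤ (Function.update τ.sp w ((τ.sp w).addOne) w).card
          rw [Function.update_self]
          exact addOne_sleep_inv ((hslp w hw1 hw2).1 h1 h2)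
        · intro h1 h2
          exfalso
          rw [hu2v, hins] at h2
          exact ToI.noConfusion h2
      · constructor
        · intro h1 h2
          show Function.update τ.sp v ((τ.sp v).addOne) w = _ ∨
            2 ≤ (Function.update τ.sp v ((τ.sp v).addOne) w).card
          rw [Function.update_of_ne hwv]
          exact (hslp w hw1 hw2).1 h1 h2
        · intro h1 h2
          rw [hu2ne w hwv] at h1 h2
          show Function.update τ.th v (SiteState.act (k + 1 - 1)) w = _ ∨
            2 ≤ (Function.update τ.th v (SiteState.act (k + 1 - 1)) w).card
          rw [Function.update_of_ne hwv]
          exact (hslp w hw1 hw2).2 h1 h2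

/-- The running odometer stays below the stable odometer `u'`. -/
def Bnd (u' : Odom n) (u : Odom n) : Prop :=
  ∀ v, 1 ≤ v → v ≤ n → u.sp v ≤ u'.sp v ∧ u.th v ≤ u'.th v

lemma bnd_toppleSp (St : Stacks n) (σ : Config n) (u' : Odom n)
    (hSt : ValidStacks St) (hstab : IsStable St σ u')
    (hnonnegSp : ∀ v, v ≤ n + 1 → 0 ≤ u'.sp v)
    {c : Config n × Odom n} {v : ℕ} (hv1 : 1 ≤ v) (hv2 : v ≤ n) (k : ℕ)
    (hσ : c.1.sp v = SiteState.act (k + 1))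
    (hg : Good St σ c) (hb : Bnd u' c.2) : Bnd u' (toppleSp St c v).2 := by
  obtain ⟨hnnS, hnnT, hmass, hslp⟩ := hg
  have hod := toppleSp_odom St c v
  have key : c.2.sp v + 1 ≤ u'.sp v := by
    by_contra hcon
    have heq : c.2.sp v = u'.sp v := le_antisymm (hb v hv1 hv2).1 (by omega)
    have hmono : hSp St σ c.2 v ≤ hSp St σ u' v := by
      unfold hSp
      have e1 : rightC St c.2 v = rightC St u' v := by unfold rightC; rw [heq]
      have e2 : leftC St c.2 v = leftC St u' v := by unfold leftC; rw [heq]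
      have e3 : upC St c.2 v = upC St u' v := by unfold upC; rw [heq]
      have m1 : rightC St c.2 (v - 1) ≤ rightC St u' (v - 1) := by
        unfold rightC; split_ifs with h
        · exact signedCount_mono _ _ (hnnS _) (hb _ h.1 h.2).1
        · exact le_rfl
      have m2 : leftC St c.2 (v + 1) ≤ leftC St u' (v + 1) := by
        unfold leftC; split_ifs with h
        · exact signedCount_mono _ _ (hnnS _) (hb _ h.1 h.2).1
        · exact le_rfl
      have m3 : downC St c.2 v ≤ downC St u' v := by
        unfold downC; split_ifs with h
        · exact signedCount_mono _ _ (hnnT _) (hb _ h.1 h.2).2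
        · exact le_rfl
      rw [e1, e2, e3]
      linarith
    have h1 := (hmass v hv1 hv2).1
    rw [hσ] at h1
    simp only [SiteState.card] at h1
    push_cast at h1
    rcases (hstab v hv1 hv2).1 with ⟨hd, hiff⟩
    rcases hd with h0 | h0
    · omega
    · have hk : k = 0 := by omega
      have hsleep := hiff.mp h0
      have hne : u'.sp v ≠ 0 := by
        intro hz
        rw [hz, (hSt v hv1 hv2).1] at hsleep
        exact SpI.noConfusion hsleep
      have hge : 1 ≤ u'.sp v := by have := hnonnegSp v (by omega); omega
      have hinv := (hslp v hv1 hv2).1 (by rw [heq]; exact hge) (by rw [heq]; exact hsleep)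
      rcases hinv with h | h
      · rw [hσ] at h; exact SiteState.noConfusion h
      · rw [hσ] at h; simp only [SiteState.card] at h; omega
  intro w hw1 hw2
  rw [hod]
  constructor
  · show Function.update c.2.sp v (c.2.sp v + 1) w ≤ u'.sp w
    by_cases hwv : w = v
    · subst hwv; rw [Function.update_self]; exact key
    · rw [Function.update_of_ne hwv]; exact (hb w hw1 hw2).1
  · exact (hb w hw1 hw2).2

lemma bnd_toppleTh (St : Stacks n) (σ : Config n) (u' : Odom n)
    (hSt : ValidStacks St) (hstab : IsStable St σ u')
    (hnonnegTh : ∀ v, 1 ≤ v → v ≤ n → 0 ≤ u'.th v)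
    {c : Config n × Odom n} {v : ℕ} (hv1 : 1 ≤ v) (hv2 : v ≤ n) (k : ℕ)
    (hσ : c.1.th v = SiteState.act (k + 1))
    (hg : Good St σ c) (hb : Bnd u' c.2) : Bnd u' (toppleTh St c v).2 := by
  obtain ⟨hnnS, hnnT, hmass, hslp⟩ := hg
  have hod := toppleTh_odom St c v
  have key : c.2.th v + 1 ≤ u'.th v := by
    by_contra hcon
    have heq : c.2.th v = u'.th v := le_antisymm (hb v hv1 hv2).2 (by omega)
    have hmono : hTh St σ c.2 v ≤ hTh St σ u' v := by
      unfold hTh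
      have e1 : downC St c.2 v = downC St u' v := by unfold downC; rw [heq]
      have m1 : upC St c.2 v ≤ upC St u' v := by
        unfold upC; split_ifs with h
        · exact signedCount_mono _ _ (hnnS _) (hb _ h.1 h.2).1
        · exact le_rfl
      rw [e1]
      linarith
    have h1 := (hmass v hv1 hv2).2
    rw [hσ] at h1
    simp only [SiteState.card] at h1
    push_cast at h1
    rcases (hstab v hv1 hv2).2 with ⟨hd, hiff⟩
    rcases hd with h0 | h0
    · omega
    · have hk : k = 0 := by omega
      have hsleep := hiff.mp h0
      have hne : u'.th v ≠ 0 := by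
        intro hz
        rw [hz, (hSt v hv1 hv2).2] at hsleep
        exact ToI.noConfusion hsleep
      have hge : 1 ≤ u'.th v := by have := hnonnegTh v hv1 hv2; omega
      have hinv := (hslp v hv1 hv2).2 (by rw [heq]; exact hge) (by rw [heq]; exact hsleep)
      rcases hinv with h | h
      · rw [hσ] at h; exact SiteState.noConfusion h
      · rw [hσ] at h; simp only [SiteState.card] at h; omega
  intro w hw1 hw2
  rw [hod]
  refine ⟨(hb w hw1 hw2).1, ?_⟩
  show Function.update c.2.th v (c.2.th v + 1) w ≤ u'.th w
  by_cases hwv : w = v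
  · subst hwv; rw [Function.update_self]; exact key
  · rw [Function.update_of_ne hwv]; exact (hb w hw1 hw2).2

lemma run_take_succ (St : Stacks n) (σ : Config n) (L : List Site) (i : ℕ)
    (h : i < L.length) :
    run St σ (L.take (i + 1)) = toppleAt St (run St σ (L.take i)) (L.get ⟨i, h⟩) := by
  rw [run, run, List.take_succ, List.foldl_append]
  simp [List.getElem?_eq_getElem h]

lemma zero_counts (St : Stacks n) :
    (∀ v, leftC St (zeroOdom n) v = 0) ∧ (∀ v, rightC St (zeroOdom n) v = 0) ∧
    (∀ v, upC St (zeroOdom n) v = 0) ∧ (∀ v, downC St (zeroOdom n) v = 0) := by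
  refine ⟨fun v => ?_, fun v => ?_, fun v => ?_, fun v => ?_⟩ <;>
    first
    | (unfold leftC; split_ifs <;> first | exact signedCount_zero _ _ | rfl)
    | (unfold rightC; split_ifs <;> first | exact signedCount_zero _ _ | rfl)
    | (unfold upC; split_ifs <;> first | exact signedCount_zero _ _ | rfl)
    | (unfold downC; split_ifs <;> first | exact signedCount_zero _ _ | rfl)

lemma good_init (St : Stacks n) (σ : Config n) : Good St σ (σ, zeroOdom n) := by
  obtain ⟨hL, hR, hU, hD⟩ := zero_counts St
  refine ⟨fun v => le_refl 0, fun v => le_refl 0, ?_, ?_⟩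
  · intro v hv1 hv2
    constructor
    · show ((σ.sp v).card : ℤ) = hSp St σ (zeroOdom n) v
      unfold hSp
      rw [hL, hL, hR, hR, hU, hD]
      ring
    · show ((σ.th v).card : ℤ) = hTh St σ (zeroOdom n) v
      unfold hTh
      rw [hU, hD]
      ring
  · intro v hv1 hv2
    constructor
    · intro h; exact absurd h (by norm_num [zeroOdom])
    · intro h; exact absurd h (by norm_num [zeroOdom])

lemma run_invariant (St : Stacks n) (σ : Config n) (u' : Odom n)
    (hSt : ValidStacks St) (hstab : IsStable St σ u')
    (hnonnegSp : ∀ v, v ≤ n + 1 → 0 ≤ u'.sp v)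
    (hnonnegTh : ∀ v, 1 ≤ v → v ≤ n → 0 ≤ u'.th v)
    (L : List Site) (hleg : LegalSeq St σ L) :
    ∀ i, i ≤ L.length →
      Good St σ (run St σ (L.take i)) ∧ Bnd u' (run St σ (L.take i)).2 := by
  intro i
  induction i with
  | zero =>
      intro _
      have h0 : run St σ (L.take 0) = (σ, zeroOdom n) := rfl
      rw [h0]
      refine ⟨good_init St σ, ?_⟩
      intro v hv1 hv2
      exact ⟨hnonnegSp v (by omega), hnonnegTh v hv1 hv2⟩
  | succ m ih =>
      intro hm
      have hm' : m < L.length := by omega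
      obtain ⟨hg, hb⟩ := ih (by omega)
      have hun := hleg m hm'
      rw [run_take_succ St σ L m hm']
      rcases hs : L.get ⟨m, hm'⟩ with v | v <;> rw [hs] at hun
      · obtain ⟨hv1, hv2, k, hσk⟩ := hun
        exact ⟨good_toppleSp St σ hv1 hv2 k hσk hg,
          bnd_toppleSp St σ u' hSt hstab hnonnegSp hv1 hv2 k hσk hg hb⟩
      · obtain ⟨hv1, hv2, k, hσk⟩ := hun
        exact ⟨good_toppleTh St σ hv1 hv2 k hσk hg,
          bnd_toppleTh St σ u' hSt hstab hnonnegTh hv1 hv2 k hσk hg hb⟩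

end CombARW

open CombARW in
/-- A legal stabilizing procedure leaves at least as many particles
sleeping on `C_n` as any nonnegative stable odometer `u′` does. -/
theorem true_odometer_sleeps_at_least_stable
    (n : ℕ) (St : Stacks n) (σ : Config n) (u' : Odom n)
    (hSt : ValidStacks St) (hu' : IsOdom u') (hstab : IsStable St σ u')
    (hnonnegSp : ∀ v, v ≤ n + 1 → 0 ≤ u'.sp v)
    (hnonnegTh : ∀ v, 1 ≤ v → v ≤ n → 0 ≤ u'.th v)
    (L : List Site) (hL : Stabilizes St σ L) :
    ∑ v ∈ Finset.Icc 1 n, (hSp St σ u' v + hTh St σ u' v)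
      ≤ (sleepCount n (run St σ L).1 : ℤ) := by
  obtain ⟨hleg, hstable⟩ := hL
  obtain ⟨hg, hb⟩ := run_invariant St σ u' hSt hstab hnonnegSp hnonnegTh L hleg
    L.length le_rfl
  rw [List.take_length] at hg hb
  obtain ⟨hnn1, hnn2, hmass, -⟩ := hg
  set c := run St σ L with hc
  have hsc : (sleepCount n c.1 : ℤ)
      = ∑ v ∈ Finset.Icc 1 n, (((c.1.sp v).card : ℤ) + ((c.1.th v).card : ℤ)) := by
    rw [sleepCount, Nat.cast_sum]
    refine Finset.sum_congr rfl fun v hv => ?_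
    rw [Finset.mem_Icc] at hv
    rcases hstable v hv.1 hv.2 with ⟨h1 | h1, h2 | h2⟩ <;>
      rw [h1, h2] <;> simp [SiteState.card]
  have hsum : (sleepCount n c.1 : ℤ)
      = ∑ v ∈ Finset.Icc 1 n, (hSp St σ c.2 v + hTh St σ c.2 v) := by
    rw [hsc]
    refine Finset.sum_congr rfl fun v hv => ?_
    rw [Finset.mem_Icc] at hv
    rw [(hmass v hv.1 hv.2).1, (hmass v hv.1 hv.2).2]
  rw [hsum, sum_h_eq, sum_h_eq]
  have hr : rightC St c.2 n ≤ rightC St u' n := by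
    unfold rightC; split_ifs with h
    · exact signedCount_mono _ _ (hnn1 _) (hb _ h.1 h.2).1
    · exact le_rfl
  have hl : leftC St c.2 1 ≤ leftC St u' 1 := by
    unfold leftC; split_ifs with h
    · exact signedCount_mono _ _ (hnn1 _) (hb _ h.1 h.2).1
    · exact le_rfl
  linarith
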